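/- Let N be a DDNN with layers (W⁽ᵃ'ⁱ⁾, W⁽ᵛ'ⁱ⁾, σ⁽ⁱ⁾), fix a layer index j and an input x ∈ ℝ^{s₀}. For an s_j × s_{j−1} real matrix Δ, let N_Δ(x) denote the output of the DDNN on input x when W⁽ᵛ'ʲ⁾ is replaced by W⁽ᵛ'ʲ⁾ + Δ. Then the map Δ ↦ N_Δ(x) is Fréchet differentiable at Δ = 0, and its first-order expansion at 0 is exact: N_Δ(x) = N₀(x) + J(Δ) for every Δ, where J is the Fréchet derivative of Δ ↦ N_Δ(x) at 0. -/

import Mathlib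

open Matrix

attribute [local instance] Matrix.normedAddCommGroup Matrix.normedSpace

/-- Linearization of `f` around `v₀`. -/
noncomputable def Linearize {E F : Type*} [NormedAddCommGroup E] [NormedSpace ℝ E]
    [NormedAddCommGroup F] [NormedSpace ℝ F] (f : E → F) (v₀ : E) (x : E) : F :=
  f v₀ + fderiv ℝ f v₀ (x - v₀)

/-- The `k`-th activation-channel intermediate vector `v⁽ᵃ'ᵏ⁾` of a DDNN with
activation-channel weights `Wa` and activations `σ`. -/
def ddnnAct (s : ℕ → ℕ)
    (Wa : ∀ i : ℕ, Matrix (Fin (s (i + 1))) (Fin (s i)) ℝ)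
    (σ : ∀ i : ℕ, (Fin (s (i + 1)) → ℝ) → (Fin (s (i + 1)) → ℝ)) :
    ∀ k : ℕ, (Fin (s 0) → ℝ) → (Fin (s k) → ℝ)
  | 0, v => v
  | k + 1, v => σ k ((Wa k).mulVec (ddnnAct s Wa σ k v))

/-- The `k`-th value-channel intermediate vector `v⁽ᵛ'ᵏ⁾` of a DDNN;
`ddnnVal s Wa Wv σ n` is the function computed by the DDNN. -/
noncomputable def ddnnVal (s : ℕ → ℕ)
    (Wa Wv : ∀ i : ℕ, Matrix (Fin (s (i + 1))) (Fin (s i)) ℝ)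
    (σ : ∀ i : ℕ, (Fin (s (i + 1)) → ℝ) → (Fin (s (i + 1)) → ℝ)) :
    ∀ k : ℕ, (Fin (s 0) → ℝ) → (Fin (s k) → ℝ)
  | 0, v => v
  | k + 1, v =>
      Linearize (σ k) ((Wa k).mulVec (ddnnAct s Wa σ k v))
        ((Wv k).mulVec (ddnnVal s Wa Wv σ k v))

/- Only the activation channel enters the linearization points, and it does not see `W⁽ᵛ'ʲ⁾`;
so every value-channel layer after `j` is an affine map applied to an affine function of `Δ`,
and `Δ ↦ N_Δ(x)` is a continuous affine map, which is its own first-order expansion. -/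

section Linearize

variable {E F : Type*} [NormedAddCommGroup E] [NormedSpace ℝ E]
  [NormedAddCommGroup F] [NormedSpace ℝ F]

noncomputable def linearizeAffine (f : E → F) (v₀ : E) : E →ᴬ[ℝ] F :=
  (fderiv ℝ f v₀).toContinuousAffineMap + ContinuousAffineMap.const ℝ E (f v₀ - fderiv ℝ f v₀ v₀)

theorem coe_linearizeAffine (f : E → F) (v₀ : E) : ⇑(linearizeAffine f v₀) = Linearize f v₀ := by
  funext x
  simp only [linearizeAffine, Linearize, ContinuousAffineMap.add_apply,
    ContinuousLinearMap.coe_toContinuousAffineMap, ContinuousAffineMap.coe_const,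
    Function.const_apply, map_sub]
  abel

end Linearize

noncomputable def Matrix.mulVecRightCLM {m n : Type*} [Fintype m] [Fintype n] (v : n → ℝ) :
    Matrix m n ℝ →L[ℝ] (m → ℝ) :=
  LinearMap.toContinuousLinearMap ((Matrix.mulVecBilin ℝ ℝ).flip v)

theorem Matrix.mulVecRightCLM_apply {m n : Type*} [Fintype m] [Fintype n] (v : n → ℝ)
    (M : Matrix m n ℝ) : Matrix.mulVecRightCLM v M = M *ᵥ v :=
  rfl

section DDNN

variable (s : ℕ → ℕ) (Wa Wv : ∀ i : ℕ, Matrix (Fin (s (i + 1))) (Fin (s i)) ℝ)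
  (σ : ∀ i : ℕ, (Fin (s (i + 1)) → ℝ) → (Fin (s (i + 1)) → ℝ))

theorem ddnnVal_update_of_le {j k : ℕ} (hkj : k ≤ j) (W : Matrix (Fin (s (j + 1))) (Fin (s j)) ℝ) :
    ddnnVal s Wa (Function.update Wv j W) σ k = ddnnVal s Wa Wv σ k := by
  induction k with
  | zero => rfl
  | succ k ih =>
    funext v
    simp only [ddnnVal, Function.update_of_ne (show k ≠ j by omega), ih (by omega)]

theorem exists_continuousAffineMap_ddnnVal_update {j k : ℕ} (hjk : j < k) (x : Fin (s 0) → ℝ) :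
    ∃ A : Matrix (Fin (s (j + 1))) (Fin (s j)) ℝ →ᴬ[ℝ] (Fin (s k) → ℝ),
      ⇑A = fun Δ => ddnnVal s Wa (Function.update Wv j (Wv j + Δ)) σ k x := by
  induction k, hjk using Nat.le_induction with
  | base =>
    refine ⟨(linearizeAffine (σ j) ((Wa j) *ᵥ ddnnAct s Wa σ j x)).comp
      ((Matrix.mulVecRightCLM (ddnnVal s Wa Wv σ j x)).toContinuousAffineMap.comp
        (ContinuousAffineMap.const ℝ _ (Wv j) + ContinuousAffineMap.id ℝ _)), ?_⟩
    funext Δ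
    simp only [ddnnVal, Function.update_self, ddnnVal_update_of_le s Wa Wv σ le_rfl,
      ContinuousAffineMap.comp_apply, coe_linearizeAffine, ContinuousAffineMap.add_apply,
      ContinuousLinearMap.coe_toContinuousAffineMap, Matrix.mulVecRightCLM_apply,
      ContinuousAffineMap.coe_const, ContinuousAffineMap.coe_id, Function.const_apply, id_eq]
  | succ k hjk ih =>
    obtain ⟨A, hA⟩ := ih
    refine ⟨(linearizeAffine (σ k) ((Wa k) *ᵥ ddnnAct s Wa σ k x)).comp
      ((Matrix.mulVecLin (Wv k)).toContinuousLinearMap.toContinuousAffineMap.comp A), ?_⟩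
    funext Δ
    simp only [ddnnVal, Function.update_of_ne (show k ≠ j by omega),
      ContinuousAffineMap.comp_apply, coe_linearizeAffine, hA,
      ContinuousLinearMap.coe_toContinuousAffineMap, LinearMap.coe_toContinuousLinearMap',
      Matrix.mulVecLin_apply]

end DDNN

theorem ddnn_value_layer_expansion_exact_general (n : ℕ) (s : ℕ → ℕ)
    (Wa Wv : ∀ i : ℕ, Matrix (Fin (s (i + 1))) (Fin (s i)) ℝ)
    (σ : ∀ i : ℕ, (Fin (s (i + 1)) → ℝ) → (Fin (s (i + 1)) → ℝ))
    (j : ℕ) (hj : j < n) (x : Fin (s 0) → ℝ)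
    (F : Matrix (Fin (s (j + 1))) (Fin (s j)) ℝ → (Fin (s n) → ℝ))
    (hF : ∀ Δ, F Δ = ddnnVal s Wa (Function.update Wv j (Wv j + Δ)) σ n x) :
    DifferentiableAt ℝ F 0 ∧ ∀ Δ, F Δ = F 0 + fderiv ℝ F 0 Δ := by
  obtain ⟨A, hA⟩ := exists_continuousAffineMap_ddnnVal_update s Wa Wv σ hj x
  obtain rfl : F = A := by rw [hA]; exact funext hF
  -- `A.hasFDerivAt` lives on the normed topology of matrices, `A` on the product topology;
  -- stating it at this type lets the two meet by unification.
  have hderiv : HasFDerivAt (⇑A) A.contLinear 0 := A.hasFDerivAt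
  refine ⟨hderiv.differentiableAt, fun Δ => ?_⟩
  rw [hderiv.fderiv]
  exact (congrFun A.decomp Δ).trans (add_comm _ _)

/-- For a fixed input `x`, the map `Δ ↦ N_Δ(x)`, where `N_Δ` is
the DDNN with `W⁽ᵛ'ʲ⁾` replaced by `W⁽ᵛ'ʲ⁾ + Δ`, is Fréchet differentiable at
`Δ = 0` and its first-order expansion at `0` is exact. -/
theorem ddnn_value_layer_expansion_exact (n : ℕ) (s : ℕ → ℕ)
    (Wa Wv : ∀ i : ℕ, Matrix (Fin (s (i + 1))) (Fin (s i)) ℝ)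
    (σ : ∀ i : ℕ, (Fin (s (i + 1)) → ℝ) → (Fin (s (i + 1)) → ℝ))
    (hσ : ∀ i, Differentiable ℝ (σ i))
    (j : ℕ) (hj : j < n) (x : Fin (s 0) → ℝ)
    (F : Matrix (Fin (s (j + 1))) (Fin (s j)) ℝ → (Fin (s n) → ℝ))
    (hF : ∀ Δ, F Δ = ddnnVal s Wa (Function.update Wv j (Wv j + Δ)) σ n x) :
    DifferentiableAt ℝ F 0 ∧ ∀ Δ, F Δ = F 0 + fderiv ℝ F 0 Δ :=
  ddnn_value_layer_expansion_exact_general n s Wa Wv σ j hj x F hF
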